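/- arXiv:2506.12201 — 4 statements merged into one kernel-verified Lean document; each statement's English description precedes it below -/
import Mathlib

section
/- Let d ≥ 1. Let p ∈ L²(ℝ^d) be a probability density supported in [−1/2,1/2]^d with ∫_{ℝ^d} t p(t) dt = 0 (componentwise), and let f ∈ L²(ℝ^d) be supported in [−1/2,1/2]^d with f^ft(0) = 1. Define Ψ(ω₁, ω₂) := f^ft(ω₁) · conj(f^ft(ω₂)) · p^ft(ω₁ − ω₂) for ω₁, ω₂ ∈ ℝ^d. If Ψ(ω, ω) ≠ 0 for every ω ∈ ℝ^d, then for every ω ∈ ℝ^d one has f^ft(ω) = exp( ∫₀¹ (∇₁Ψ(αω, αω) / Ψ(αω, αω)) · ω dα ), where ∇₁ denotes the gradient with respect to the first argument. -/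
/-!
Since `p` is a centred probability density, `p^ft(0) = 1` and `∇p^ft(0) = 0`. Hence on the diagonal
`Ψ(ω, ω) = f^ft(ω) conj(f^ft(ω))` and `∇₁Ψ(ω, ω) = conj(f^ft(ω)) ∇f^ft(ω)`, so the integrand is the
logarithmic derivative `(d/dα) f^ft(αω) / f^ft(αω)`, and integrating it from `0` to `1` recovers
`f^ft(ω)` because `f^ft(0) = 1`. Compact support makes `f` and `p` integrable with integrable first
moments, which makes their Fourier transforms continuously differentiable.
-/

open MeasureTheory Complex

noncomputable section

/-- Fourier transform `g^ft(ω) = ∫ g(t) e^{-i t·ω} dt` on `ℝ^d`. -/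
def ft {d : ℕ} (g : (Fin d → ℝ) → ℂ) (ω : Fin d → ℝ) : ℂ :=
  ∫ t : Fin d → ℝ, g t * Complex.exp (-Complex.I * ((∑ j, t j * ω j : ℝ) : ℂ))

/-- Gradient of a `ℂ`-valued function on `ℝ^d` (equals `∇Re ξ + i ∇Im ξ` componentwise). -/
def grad {d : ℕ} (ξ : (Fin d → ℝ) → ℂ) (ω : Fin d → ℝ) : Fin d → ℂ :=
  fun j => fderiv ℝ ξ ω (Pi.single j 1)

/-- Dot product `u·v` of a real vector with a complex vector. -/
def rcDot {d : ℕ} (u : Fin d → ℝ) (v : Fin d → ℂ) : ℂ :=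
  ∑ j, (u j : ℂ) * v j

theorem integrable_of_memLp_of_eq_zero_off_isCompact {X E : Type*} [MeasurableSpace X]
    [TopologicalSpace X] [NormedAddCommGroup E] {μ : Measure X} [IsLocallyFiniteMeasure μ]
    {K : Set X} {g : X → E} {q : ENNReal}
    (hg : MemLp g q μ) (hq : 1 ≤ q) (hK : IsCompact K) (hgK : ∀ x ∉ K, g x = 0) :
    Integrable g μ :=
  ((hg.locallyIntegrable hq).integrableOn_isCompact hK).integrable_of_forall_notMem_eq_zero hgK

theorem integrable_norm_mul_of_eq_zero_off_isCompact {X E : Type*} [NormedAddCommGroup X]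
    [MeasurableSpace X] [OpensMeasurableSpace X] [NormedAddCommGroup E] {μ : Measure X} {K : Set X} {g : X → E}
    (hg : Integrable g μ) (hK : IsCompact K) (hgK : ∀ x ∉ K, g x = 0) :
    Integrable (fun x => ‖x‖ * ‖g x‖) μ := by
  refine IntegrableOn.integrable_of_forall_notMem_eq_zero (s := K) ?_
    fun x hx => by simp [hgK x hx]
  exact IntegrableOn.continuousOn_mul (by fun_prop) hg.norm.integrableOn hK

theorem VectorFourier.integrable_fourierSMulRight {V W E : Type*} [NormedAddCommGroup V]
    [NormedSpace ℝ V] [MeasurableSpace V] [BorelSpace V] [SecondCountableTopology V]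
    [NormedAddCommGroup W] [NormedSpace ℝ W] [NormedAddCommGroup E] [NormedSpace ℂ E]
    {μ : Measure V} (L : V →L[ℝ] W →L[ℝ] ℝ) {f : V → E}
    (hf : AEStronglyMeasurable f μ) (hf' : Integrable (fun v => ‖v‖ * ‖f v‖) μ) :
    Integrable (VectorFourier.fourierSMulRight L f) μ := by
  refine (hf'.const_mul (2 * Real.pi * ‖L‖)).mono' hf.fourierSMulRight (ae_of_all _ fun v => ?_)
  exact (VectorFourier.norm_fourierSMulRight_le L f v).trans_eq (by ring)

/-- Mathlib's Fourier integrals use the character `𝐞 x = exp (2π i x)`; the factor `(2π)⁻¹` turns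
`𝐞 (-ftPairing d t ω)` into the kernel `e^{-i t·ω}` of `ft`. -/
def ftPairing (d : ℕ) : (Fin d → ℝ) →L[ℝ] (Fin d → ℝ) →L[ℝ] ℝ :=
  (2 * Real.pi)⁻¹ • ∑ j, (ContinuousLinearMap.proj j).smulRight (ContinuousLinearMap.proj j)

section FourierTransform

variable {d : ℕ} {g : (Fin d → ℝ) → ℂ}

theorem ftPairing_apply (t w : Fin d → ℝ) :
    ftPairing d t w = (2 * Real.pi)⁻¹ * ∑ j, t j * w j := by
  simp [ftPairing, Finset.mul_sum]

theorem fourierChar_neg_ftPairing (t w : Fin d → ℝ) :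
    (Real.fourierChar (-(ftPairing d).toLinearMap₁₂ t w) : ℂ) =
      exp (-I * ((∑ j, t j * w j : ℝ) : ℂ)) := by
  rw [Real.fourierChar_apply, ContinuousLinearMap.toLinearMap₁₂_apply_apply_apply,
    ftPairing_apply]
  congr 1
  push_cast
  field_simp

theorem ft_eq_fourierIntegral :
    ft g = VectorFourier.fourierIntegral Real.fourierChar volume (ftPairing d).toLinearMap₁₂ g := by
  ext ω
  rw [ft, VectorFourier.fourierIntegral]
  congr 1 with t
  rw [Circle.smul_def, fourierChar_neg_ftPairing, smul_eq_mul, mul_comm]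

theorem ft_zero : ft g 0 = ∫ t, g t := by
  simp [ft]

theorem contDiff_ft (hg : Integrable g) (hg' : Integrable fun t => ‖t‖ * ‖g t‖) :
    ContDiff ℝ 1 (ft g) := by
  rw [ft_eq_fourierIntegral]
  refine VectorFourier.contDiff_fourierIntegral _ fun n hn => ?_
  have hn : n ≤ 1 := mod_cast hn
  interval_cases n
  · simpa using hg.norm
  · simpa using hg'

theorem fderiv_ft_apply (hg : Integrable g) (hg' : Integrable fun t => ‖t‖ * ‖g t‖)
    (ω v : Fin d → ℝ) :
    fderiv ℝ (ft g) ω v = ft (fun t => -I * ((∑ j, t j * v j : ℝ) : ℂ) * g t) ω := by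
  rw [ft_eq_fourierIntegral, VectorFourier.fderiv_fourierIntegral _ hg hg',
    VectorFourier.fourierIntegral_continuousLinearMap_apply Real.continuous_fourierChar
      (VectorFourier.integrable_fourierSMulRight _ hg.1 hg'), ← ft_eq_fourierIntegral]
  congr 1 with t
  simp only [VectorFourier.fourierSMulRight_apply, ftPairing_apply, smul_eq_mul, real_smul]
  push_cast
  field_simp

theorem rcDot_grad (ξ : (Fin d → ℝ) → ℂ) (u ω : Fin d → ℝ) :
    rcDot u (grad ξ ω) = fderiv ℝ ξ ω u := by
  unfold rcDot grad
  conv_rhs => rw [← ContinuousLinearMap.coe_coe, LinearMap.pi_apply_eq_sum_univ]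
  refine Finset.sum_congr rfl fun j _ => ?_
  rw [ContinuousLinearMap.coe_coe, real_smul]
  congr 2 with i
  simp [Pi.single_apply, eq_comm]

theorem rcDot_div_const (u : Fin d → ℝ) (v : Fin d → ℂ) (c : ℂ) :
    rcDot u (fun j => v j / c) = rcDot u v / c := by
  simp only [rcDot, Finset.sum_div, mul_div_assoc]

theorem grad_ft_zero (hg : Integrable g) (hg' : Integrable fun t => ‖t‖ * ‖g t‖) (j : Fin d) :
    grad (ft g) 0 j = -I * ∫ t, (t j : ℂ) * g t := by
  rw [grad, fderiv_ft_apply hg hg', ft_zero, ← integral_const_mul]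
  simp [Pi.single_apply, mul_assoc]

theorem fderiv_ft_ofReal_zero_eq_zero {p : (Fin d → ℝ) → ℝ} (hp : Integrable fun t => (p t : ℂ))
    (hp' : Integrable fun t => ‖t‖ * ‖(p t : ℂ)‖) (hcentered : ∀ j, ∫ t, t j * p t = 0) :
    fderiv ℝ (ft fun t => (p t : ℂ)) 0 = 0 := by
  ext1 v
  rw [← rcDot_grad, zero_apply]
  refine Finset.sum_eq_zero fun j _ => ?_
  rw [grad_ft_zero hp hp']
  simp_rw [← ofReal_mul, integral_complex_ofReal, hcentered, ofReal_zero, mul_zero]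

end FourierTransform

theorem fderiv_mul_mul_comp_sub_self {E : Type*} [NormedAddCommGroup E] [NormedSpace ℝ E]
    {F P : E → ℂ} {β : E} (c : ℂ) (hF : DifferentiableAt ℝ F β) (hP : DifferentiableAt ℝ P 0)
    (hP0 : P 0 = 1) (hP' : fderiv ℝ P 0 = 0) :
    fderiv ℝ (fun w => F w * c * P (w - β)) β = c • fderiv ℝ F β := by
  have hshift : HasFDerivAt (fun w => P (w - β)) (fderiv ℝ P 0) β := by
    have hP : HasFDerivAt P (fderiv ℝ P 0) (β - β) := by simpa using hP.hasFDerivAt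
    exact hP.comp (f := fun w => w - β) β ((hasFDerivAt_id β).sub_const β)
  rw [((hF.hasFDerivAt.mul_const c).fun_mul hshift).fderiv]
  ext v
  simp [hP0, hP']

theorem rcDot_grad_div_diagonal {d : ℕ} {F P : (Fin d → ℝ) → ℂ} {β : Fin d → ℝ}
    (hF : DifferentiableAt ℝ F β) (hFβ : F β ≠ 0) (hP : DifferentiableAt ℝ P 0)
    (hP0 : P 0 = 1) (hP' : fderiv ℝ P 0 = 0) (u : Fin d → ℝ) :
    rcDot u (fun j => grad (fun w => F w * starRingEnd ℂ (F β) * P (w - β)) β j /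
        (F β * starRingEnd ℂ (F β) * P (β - β))) = fderiv ℝ F β u / F β := by
  rw [rcDot_div_const, rcDot_grad, fderiv_mul_mul_comp_sub_self _ hF hP hP0 hP', sub_self, hP0,
    mul_one, smul_apply, smul_eq_mul, mul_comm (F β), mul_div_mul_left _ _ ((map_ne_zero _).2 hFβ)]

theorem eq_mul_exp_integral_div_of_hasDerivAt {G G' : ℝ → ℂ} (hG : ∀ s, HasDerivAt G (G' s) s)
    (hG' : Continuous G') (hG0 : ∀ s, G s ≠ 0) (a b : ℝ) :
    G b = G a * exp (∫ s in a..b, G' s / G s) := by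
  have hq : Continuous fun s => G' s / G s :=
    hG'.div (continuous_iff_continuousAt.2 fun s => (hG s).continuousAt) hG0
  set Q := fun x => ∫ s in a..x, G' s / G s
  have hconst : ∀ x, HasDerivAt (fun s => G s * exp (-Q s)) 0 x := by
    intro x
    have hQ : HasDerivAt Q (G' x / G x) x := (hq.integral_hasStrictDerivAt a x).hasDerivAt
    refine ((hG x).mul hQ.neg.cexp).congr_deriv ?_
    have := hG0 x
    field_simp
    ring
  have h := is_const_of_deriv_eq_zero (fun x => (hconst x).differentiableAt)
    (fun x => (hconst x).deriv) b a
  simp only [Q, intervalIntegral.integral_same, neg_zero, exp_zero, mul_one] at h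
  rw [← h, mul_assoc, ← exp_add, neg_add_cancel, exp_zero, mul_one]

theorem eq_exp_integral_fderiv_div {E : Type*} [NormedAddCommGroup E] [NormedSpace ℝ E]
    {F : E → ℂ} (hF : ContDiff ℝ 1 F) (hF0 : ∀ w, F w ≠ 0) (h0 : F 0 = 1) (ω : E) :
    F ω = exp (∫ α in (0 : ℝ)..1, fderiv ℝ F (α • ω) ω / F (α • ω)) := by
  have hpath : ∀ s : ℝ, HasDerivAt (fun s : ℝ => F (s • ω)) (fderiv ℝ F (s • ω) ω) s := fun s =>
    (hF.differentiable one_ne_zero _).hasFDerivAt.comp_hasDerivAt s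
      (by simpa using (hasDerivAt_id s).smul_const ω)
  have hpath' : Continuous fun s : ℝ => fderiv ℝ F (s • ω) ω :=
    ((hF.continuous_fderiv one_ne_zero).comp (by fun_prop)).clm_apply continuous_const
  simpa [h0] using eq_mul_exp_integral_div_of_hasDerivAt hpath hpath' (fun s => hF0 _) 0 1

theorem kotlarski_identification_general
    (d : ℕ)
    (p f : (Fin d → ℝ) → ℝ)
    (hpL2 : MemLp p 2)
    (hp_int : ∫ t : Fin d → ℝ, p t = 1)
    (hp_supp : ∀ t : Fin d → ℝ,
      t ∉ Set.Icc (fun _ => -(1/2 : ℝ)) (fun _ => (1/2 : ℝ)) → p t = 0)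
    (hp_centered : ∀ j : Fin d, ∫ t : Fin d → ℝ, t j * p t = 0)
    (hfL2 : MemLp f 2)
    (hf_supp : ∀ t : Fin d → ℝ,
      t ∉ Set.Icc (fun _ => -(1/2 : ℝ)) (fun _ => (1/2 : ℝ)) → f t = 0)
    (hf0 : ft (fun t => (f t : ℂ)) 0 = 1)
    (Ψ : (Fin d → ℝ) → (Fin d → ℝ) → ℂ)
    (hΨ : ∀ ω₁ ω₂ : Fin d → ℝ,
      Ψ ω₁ ω₂ = ft (fun t => (f t : ℂ)) ω₁ * (starRingEnd ℂ) (ft (fun t => (f t : ℂ)) ω₂) *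
        ft (fun t => (p t : ℂ)) (ω₁ - ω₂))
    (hΨne : ∀ ω : Fin d → ℝ, Ψ ω ω ≠ 0) :
    ∀ ω : Fin d → ℝ,
      ft (fun t => (f t : ℂ)) ω =
        Complex.exp (∫ α in (0:ℝ)..1,
          rcDot ω (fun j => grad (fun w => Ψ w (α • ω)) (α • ω) j / Ψ (α • ω) (α • ω))) := by
  intro ω
  have hK : IsCompact (Set.Icc (fun _ => -(1/2 : ℝ)) (fun _ => (1/2 : ℝ)) : Set (Fin d → ℝ)) :=
    isCompact_Icc
  have hfi : Integrable fun t => (f t : ℂ) :=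
    (integrable_of_memLp_of_eq_zero_off_isCompact hfL2 one_le_two hK hf_supp).ofReal
  have hpi : Integrable fun t => (p t : ℂ) :=
    (integrable_of_memLp_of_eq_zero_off_isCompact hpL2 one_le_two hK hp_supp).ofReal
  have hfm := integrable_norm_mul_of_eq_zero_off_isCompact hfi hK (by simpa using hf_supp)
  have hpm := integrable_norm_mul_of_eq_zero_off_isCompact hpi hK (by simpa using hp_supp)
  have hP0 : ft (fun t => (p t : ℂ)) 0 = 1 := by
    rw [ft_zero, integral_complex_ofReal, hp_int, ofReal_one]
  have hP' := fderiv_ft_ofReal_zero_eq_zero hpi hpm hp_centered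
  set F := ft fun t => (f t : ℂ)
  set P := ft fun t => (p t : ℂ)
  have hF : ContDiff ℝ 1 F := contDiff_ft hfi hfm
  have hP : ContDiff ℝ 1 P := contDiff_ft hpi hpm
  have hFne : ∀ w, F w ≠ 0 := fun w hw => hΨne w (by rw [hΨ, hw, zero_mul, zero_mul])
  rw [intervalIntegral.integral_congr fun α _ => by
    simp only [hΨ]
    exact rcDot_grad_div_diagonal (hF.differentiable one_ne_zero _) (hFne _)
      (hP.differentiable one_ne_zero 0) hP0 hP' ω]
  exact eq_exp_integral_fderiv_div hF hFne hf0 ω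

/-- **Identification (Kotlarski's formula for functional MRA).**
If `p ∈ L²` is a centered probability density supported in `[-1/2,1/2]^d`, `f ∈ L²` is
supported in `[-1/2,1/2]^d` with `f^ft(0) = 1`, and
`Ψ(ω₁,ω₂) = f^ft(ω₁) conj(f^ft(ω₂)) p^ft(ω₁-ω₂)` is nonvanishing on the diagonal,
then `f^ft(ω) = exp (∫₀¹ (∇₁Ψ(αω,αω)/Ψ(αω,αω)) · ω dα)`. -/
theorem kotlarski_identification
    (d : ℕ) (hd : 1 ≤ d)
    (p f : (Fin d → ℝ) → ℝ)
    (hp_meas : Measurable p) (hpL2 : MemLp p 2)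
    (hp_nonneg : ∀ t, 0 ≤ p t)
    (hp_int : ∫ t : Fin d → ℝ, p t = 1)
    (hp_supp : ∀ t : Fin d → ℝ,
      t ∉ Set.Icc (fun _ => -(1/2 : ℝ)) (fun _ => (1/2 : ℝ)) → p t = 0)
    (hp_centered : ∀ j : Fin d, ∫ t : Fin d → ℝ, t j * p t = 0)
    (hf_meas : Measurable f) (hfL2 : MemLp f 2)
    (hf_supp : ∀ t : Fin d → ℝ,
      t ∉ Set.Icc (fun _ => -(1/2 : ℝ)) (fun _ => (1/2 : ℝ)) → f t = 0)
    (hf0 : ft (fun t => (f t : ℂ)) 0 = 1)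
    (Ψ : (Fin d → ℝ) → (Fin d → ℝ) → ℂ)
    (hΨ : ∀ ω₁ ω₂ : Fin d → ℝ,
      Ψ ω₁ ω₂ = ft (fun t => (f t : ℂ)) ω₁ * (starRingEnd ℂ) (ft (fun t => (f t : ℂ)) ω₂) *
        ft (fun t => (p t : ℂ)) (ω₁ - ω₂))
    (hΨne : ∀ ω : Fin d → ℝ, Ψ ω ω ≠ 0) :
    ∀ ω : Fin d → ℝ,
      ft (fun t => (f t : ℂ)) ω =
        Complex.exp (∫ α in (0:ℝ)..1,
          rcDot ω (fun j => grad (fun w => Ψ w (α • ω)) (α • ω) j / Ψ (α • ω) (α • ω))) :=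
  kotlarski_identification_general d p f hpL2 hp_int hp_supp hp_centered hfL2 hf_supp hf0 Ψ hΨ hΨne
end
end

section
/- Let D = [−1,1]^d. Let ζ be a random vector in ℝ^d supported in [−1/2,1/2]^d and η : Ω × ℝ^d → ℝ a jointly measurable random field, supported in D, with ζ and η independent. Let f : ℝ^d → ℝ be bounded, measurable and supported in [−1/2,1/2]^d. Assume E[η(t)] = 0 for every t ∈ D and ∬_{D×D} E|η(t)η(t')| dt dt' < ∞, as well as ∫_D E|η(t)| dt < ∞. Define y(t) := f(t − ζ) + η(t), y^ft(ω) := ∫_D y(t) e^{−i t·ω} dt and η^ft(ω) := ∫_D η(t) e^{−i t·ω} dt. Then for all ω₁, ω₂ ∈ ℝ^d: E[ y^ft(ω₁) · conj(y^ft(ω₂)) ] = f^ft(ω₁) · conj(f^ft(ω₂)) · E[e^{−i (ω₁−ω₂)·ζ}] + E[ η^ft(ω₁) · conj(η^ft(ω₂)) ]. -/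
open MeasureTheory Complex ProbabilityTheory

noncomputable section

/-- The cube `D = [-1,1]^d`. -/
def Dcube (d : ℕ) : Set (Fin d → ℝ) :=
  Set.Icc (fun _ => (-1 : ℝ)) (fun _ => (1 : ℝ))

/-! Since `f(· - ζ)` is supported in `D`, its transform over `D` is `f^ft(ω) e^{-iω·ζ}`, so
`y^ft(ω) = f^ft(ω) e^{-iω·ζ} + η^ft(ω)`. Expanding the product, each cross term has the form
`E[g(ζ) ∫_D η(t) w(t) dt]` with `g`, `w` bounded; by Fubini and independence it equals
`∫_D E[g(ζ)] E[η(t)] w(t) dt = 0`. The two integrability assumptions on `η` bound `|η^ft|` by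
`∫_D |η|`, which makes `η^ft` and `η^ft(ω₁) conj η^ft(ω₂)` integrable and justifies Fubini. -/

open Function ComplexConjugate
open scoped ENNReal

/-- `ft g ω = ∫ t, g t * fourierKernel ω t` holds by `rfl`. -/
def fourierKernel {d : ℕ} (ω t : Fin d → ℝ) : ℂ :=
  Complex.exp (-Complex.I * ((∑ j, t j * ω j : ℝ) : ℂ))

section FourierKernel

variable {d : ℕ}

@[fun_prop]
lemma continuous_fourierKernel (ω : Fin d → ℝ) : Continuous (fourierKernel ω) := by
  unfold fourierKernel
  fun_prop

lemma norm_fourierKernel (ω t : Fin d → ℝ) : ‖fourierKernel ω t‖ = 1 := by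
  simp [fourierKernel, Complex.norm_exp]

lemma fourierKernel_add (ω s z : Fin d → ℝ) :
    fourierKernel ω (s + z) = fourierKernel ω s * fourierKernel ω z := by
  simp only [fourierKernel, ← Complex.exp_add, Pi.add_apply, add_mul, Finset.sum_add_distrib]
  push_cast
  ring_nf

lemma fourierKernel_mul_conj (ω₁ ω₂ z : Fin d → ℝ) :
    fourierKernel ω₁ z * conj (fourierKernel ω₂ z) =
      Complex.exp (-Complex.I * ((∑ j, (ω₁ j - ω₂ j) * z j : ℝ) : ℂ)) := by
  simp only [fourierKernel, ← Complex.exp_conj, ← Complex.exp_add, map_mul, map_neg,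
    Complex.conj_I, Complex.conj_ofReal, sub_mul, Finset.sum_sub_distrib, mul_comm (ω₁ _),
    mul_comm (ω₂ _)]
  push_cast
  ring_nf

end FourierKernel

lemma integral_add_mul_add_of_integral_mul_eq_zero {Ω 𝕜 : Type*} [MeasurableSpace Ω] [RCLike 𝕜]
    {μ : Measure Ω} [IsFiniteMeasure μ] {Z₁ Z₂ N₁ N₂ : Ω → 𝕜} {C₁ C₂ : ℝ}
    (hZ₁ : AEStronglyMeasurable Z₁ μ) (hZ₁C : ∀ᵐ a ∂μ, ‖Z₁ a‖ ≤ C₁)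
    (hZ₂ : AEStronglyMeasurable Z₂ μ) (hZ₂C : ∀ᵐ a ∂μ, ‖Z₂ a‖ ≤ C₂)
    (hN₁ : Integrable N₁ μ) (hN₂ : Integrable N₂ μ) (hN : Integrable (fun a => N₁ a * N₂ a) μ)
    (h₁₂ : ∫ a, Z₁ a * N₂ a ∂μ = 0) (h₂₁ : ∫ a, Z₂ a * N₁ a ∂μ = 0) :
    ∫ a, (Z₁ a + N₁ a) * (Z₂ a + N₂ a) ∂μ = ∫ a, Z₁ a * Z₂ a ∂μ + ∫ a, N₁ a * N₂ a ∂μ := by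
  have hZZ : Integrable (fun a => Z₁ a * Z₂ a) μ :=
    (Integrable.of_bound hZ₂ C₂ hZ₂C).bdd_mul hZ₁ hZ₁C
  have hZN : Integrable (fun a => Z₁ a * N₂ a) μ := hN₂.bdd_mul hZ₁ hZ₁C
  have hNZ : Integrable (fun a => Z₂ a * N₁ a) μ := hN₁.bdd_mul hZ₂ hZ₂C
  calc ∫ a, (Z₁ a + N₁ a) * (Z₂ a + N₂ a) ∂μ
      = ∫ a, (Z₁ a * Z₂ a + Z₁ a * N₂ a) + (Z₂ a * N₁ a + N₁ a * N₂ a) ∂μ := by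
        congr with a
        ring
    _ = ∫ a, Z₁ a * Z₂ a ∂μ + ∫ a, N₁ a * N₂ a ∂μ := by
      rw [integral_add (hZZ.fun_add hZN) (hNZ.fun_add hN), integral_add hZZ hZN,
        integral_add hNZ hN, h₁₂, h₂₁, add_zero, zero_add]

section RandomField

variable {Ω T E : Type*} [MeasurableSpace Ω] [MeasurableSpace T] [MeasurableSpace E]
  {μ : Measure Ω} {ν : Measure T} {η : Ω → T → ℝ}

lemma conj_integral_ofReal_mul (h : T → ℝ) (w : T → ℂ) :
    conj (∫ t, (h t : ℂ) * w t ∂ν) = ∫ t, (h t : ℂ) * conj (w t) ∂ν := by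
  rw [← integral_conj]
  simp only [map_mul, Complex.conj_ofReal]

lemma enorm_integral_ofReal_mul_le {h : T → ℝ} {w : T → ℂ} (hw : ∀ t, ‖w t‖ ≤ 1) :
    ‖∫ t, (h t : ℂ) * w t ∂ν‖ₑ ≤ ∫⁻ t, ENNReal.ofReal |h t| ∂ν := by
  refine (enorm_integral_le_lintegral_enorm _).trans (lintegral_mono fun t => ?_)
  rw [← ofReal_norm, norm_mul, Complex.norm_real, Real.norm_eq_abs]
  exact ENNReal.ofReal_le_ofReal (mul_le_of_le_one_right (abs_nonneg _) (hw t))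

variable [SFinite μ] [SFinite ν]

lemma integrable_uncurry_ofReal (hη : Measurable (uncurry η))
    (h₁ : ∫⁻ t, ∫⁻ a, ENNReal.ofReal |η a t| ∂μ ∂ν < ⊤) :
    Integrable (uncurry fun a t => (η a t : ℂ)) (μ.prod ν) := by
  refine ⟨(Complex.measurable_ofReal.comp hη).aestronglyMeasurable, ?_⟩
  have hnorm : ∀ p : Ω × T, ‖(η p.1 p.2 : ℂ)‖ₑ = ENNReal.ofReal |η p.1 p.2| := fun p => by
    rw [← ofReal_norm, Complex.norm_real, Real.norm_eq_abs]
  simp only [HasFiniteIntegral, uncurry_def, hnorm]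
  rwa [lintegral_prod_symm (fun p => ENNReal.ofReal |η p.1 p.2|)
    hη.abs.ennreal_ofReal.aemeasurable]

lemma integrable_integral_ofReal_mul (hη : Measurable (uncurry η))
    (h₁ : ∫⁻ t, ∫⁻ a, ENNReal.ofReal |η a t| ∂μ ∂ν < ⊤) {w : T → ℂ} (hw : Measurable w)
    (hw₁ : ∀ t, ‖w t‖ ≤ 1) :
    Integrable (fun a => ∫ t, (η a t : ℂ) * w t ∂ν) μ :=
  ((integrable_uncurry_ofReal hη h₁).mul_bdd (hw.comp measurable_snd).aestronglyMeasurable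
    (ae_of_all _ fun p => hw₁ p.2)).integral_prod_left

lemma integrable_integral_ofReal_mul_mul (hη : Measurable (uncurry η))
    (h₁ : ∫⁻ t, ∫⁻ a, ENNReal.ofReal |η a t| ∂μ ∂ν < ⊤)
    (h₂ : ∫⁻ q, ∫⁻ a, ENNReal.ofReal |η a q.1 * η a q.2| ∂μ ∂(ν.prod ν) < ⊤)
    {w w' : T → ℂ} (hw : Measurable w) (hw' : Measurable w') (hw₁ : ∀ t, ‖w t‖ ≤ 1)
    (hw'₁ : ∀ t, ‖w' t‖ ≤ 1) :
    Integrable (fun a => (∫ t, (η a t : ℂ) * w t ∂ν) * ∫ t, (η a t : ℂ) * w' t ∂ν) μ := by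
  set K : Ω → ℝ≥0∞ := fun a => ∫⁻ t, ENNReal.ofReal |η a t| ∂ν
  have hsection : ∀ a, Measurable fun t => ENNReal.ofReal |η a t| := fun a =>
    (hη.comp measurable_prodMk_left).abs.ennreal_ofReal
  have hKK : ∀ a, K a * K a = ∫⁻ q, ENNReal.ofReal |η a q.1 * η a q.2| ∂(ν.prod ν) := by
    intro a
    simp only [K, abs_mul, ENNReal.ofReal_mul (abs_nonneg _)]
    exact (lintegral_prod_mul (hsection a).aemeasurable (hsection a).aemeasurable).symm
  have hmeas₂ : Measurable fun p : Ω × (T × T) => ENNReal.ofReal |η p.1 p.2.1 * η p.1 p.2.2| :=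
    ((hη.comp (measurable_fst.prodMk measurable_snd.fst)).mul
      (hη.comp (measurable_fst.prodMk measurable_snd.snd))).abs.ennreal_ofReal
  refine ⟨((integrable_integral_ofReal_mul hη h₁ hw hw₁).1.mul
    (integrable_integral_ofReal_mul hη h₁ hw' hw'₁).1), ?_⟩
  calc ∫⁻ a, ‖(∫ t, (η a t : ℂ) * w t ∂ν) * ∫ t, (η a t : ℂ) * w' t ∂ν‖ₑ ∂μ
      ≤ ∫⁻ a, K a * K a ∂μ := lintegral_mono fun a => by
        rw [enorm_mul]
        exact mul_le_mul' (enorm_integral_ofReal_mul_le hw₁) (enorm_integral_ofReal_mul_le hw'₁)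
    _ = ∫⁻ q, ∫⁻ a, ENNReal.ofReal |η a q.1 * η a q.2| ∂μ ∂(ν.prod ν) := by
      simp only [hKK]
      exact lintegral_lintegral_swap hmeas₂.aemeasurable
    _ < ⊤ := h₂

lemma integral_comp_mul_integral_ofReal_mul_eq_zero [IsProbabilityMeasure μ]
    (hη : Measurable (uncurry η)) (h₁ : ∫⁻ t, ∫⁻ a, ENNReal.ofReal |η a t| ∂μ ∂ν < ⊤)
    (hmean : ∀ᵐ t ∂ν, ∫ a, η a t ∂μ = 0) {ζ : Ω → E} (hζ : Measurable ζ)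
    (hindep : IndepFun ζ η μ) {g : E → ℂ} {C : ℝ} (hg : Measurable g) (hgC : ∀ z, ‖g z‖ ≤ C)
    {w : T → ℂ} (hw : Measurable w) (hw₁ : ∀ t, ‖w t‖ ≤ 1) :
    ∫ a, g (ζ a) * ∫ t, (η a t : ℂ) * w t ∂ν ∂μ = 0 := by
  have hint : Integrable (uncurry fun a t => g (ζ a) * ((η a t : ℂ) * w t)) (μ.prod ν) := by
    refine ((integrable_uncurry_ofReal hη h₁).mul_bdd
      (hw.comp measurable_snd).aestronglyMeasurable (ae_of_all _ fun p => hw₁ p.2)).bdd_mul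
      (c := C) (hg.comp (hζ.comp measurable_fst)).aestronglyMeasurable
      (ae_of_all _ fun p => hgC _)
  have hηΩ : Measurable η :=
    measurable_pi_lambda _ fun t => hη.comp (measurable_id.prodMk measurable_const)
  have hfactor : ∀ t,
      ∫ a, g (ζ a) * (η a t : ℂ) ∂μ = (∫ a, g (ζ a) ∂μ) * ∫ a, (η a t : ℂ) ∂μ :=
    fun t => hindep.integral_fun_comp_mul_comp (g := fun h : T → ℝ => (h t : ℂ))
      hζ.aemeasurable hηΩ.aemeasurable hg.aestronglyMeasurable
      (by fun_prop : Measurable fun h : T → ℝ => (h t : ℂ)).aestronglyMeasurable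
  calc ∫ a, g (ζ a) * ∫ t, (η a t : ℂ) * w t ∂ν ∂μ
      = ∫ a, ∫ t, g (ζ a) * ((η a t : ℂ) * w t) ∂ν ∂μ := by simp only [integral_const_mul]
    _ = ∫ t, ∫ a, g (ζ a) * ((η a t : ℂ) * w t) ∂μ ∂ν := integral_integral_swap hint
    _ = ∫ t, (0 : ℂ) ∂ν := integral_congr_ae <| hmean.mono fun t ht => by
        simp only [← mul_assoc, integral_mul_const, hfactor, integral_complex_ofReal, ht,
          Complex.ofReal_zero, mul_zero, zero_mul]
    _ = 0 := integral_zero _ _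

omit [SFinite μ] in
lemma integral_add_mul_conj_add_of_indepFun [IsProbabilityMeasure μ]
    (hη : Measurable (uncurry η)) (h₁ : ∫⁻ t, ∫⁻ a, ENNReal.ofReal |η a t| ∂μ ∂ν < ⊤)
    (h₂ : ∫⁻ q, ∫⁻ a, ENNReal.ofReal |η a q.1 * η a q.2| ∂μ ∂(ν.prod ν) < ⊤)
    (hmean : ∀ᵐ t ∂ν, ∫ a, η a t ∂μ = 0) {ζ : Ω → E} (hζ : Measurable ζ)
    (hindep : IndepFun ζ η μ) {k₁ k₂ : E → ℂ} (hk₁ : Measurable k₁) (hk₂ : Measurable k₂)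
    (hk₁₁ : ∀ z, ‖k₁ z‖ ≤ 1) (hk₂₁ : ∀ z, ‖k₂ z‖ ≤ 1) {w₁ w₂ : T → ℂ} (hw₁ : Measurable w₁)
    (hw₂ : Measurable w₂) (hw₁₁ : ∀ t, ‖w₁ t‖ ≤ 1) (hw₂₁ : ∀ t, ‖w₂ t‖ ≤ 1) (c₁ c₂ : ℂ) :
    ∫ a, (c₁ * k₁ (ζ a) + ∫ t, (η a t : ℂ) * w₁ t ∂ν) *
        conj (c₂ * k₂ (ζ a) + ∫ t, (η a t : ℂ) * w₂ t ∂ν) ∂μ =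
      c₁ * conj c₂ * ∫ a, k₁ (ζ a) * conj (k₂ (ζ a)) ∂μ +
        ∫ a, (∫ t, (η a t : ℂ) * w₁ t ∂ν) * conj (∫ t, (η a t : ℂ) * w₂ t ∂ν) ∂μ := by
  have hZ₁ : ∀ z, ‖c₁ * k₁ z‖ ≤ ‖c₁‖ := fun z => by
    simpa [norm_mul] using mul_le_of_le_one_right (norm_nonneg c₁) (hk₁₁ z)
  have hZ₂ : ∀ z, ‖conj (c₂ * k₂ z)‖ ≤ ‖c₂‖ := fun z => by
    simpa [norm_mul] using mul_le_of_le_one_right (norm_nonneg c₂) (hk₂₁ z)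
  have hw₂₁' : ∀ t, ‖conj (w₂ t)‖ ≤ 1 := fun t => by simpa using hw₂₁ t
  have hg₁ : Measurable fun z => c₁ * k₁ z := hk₁.const_mul c₁
  have hg₂ : Measurable fun z => conj (c₂ * k₂ z) :=
    Complex.continuous_conj.measurable.comp (hk₂.const_mul c₂)
  simp only [map_add, conj_integral_ofReal_mul]
  rw [integral_add_mul_add_of_integral_mul_eq_zero (Z₁ := fun a => c₁ * k₁ (ζ a))
    (Z₂ := fun a => conj (c₂ * k₂ (ζ a)))
    (hg₁.comp hζ).aestronglyMeasurable (ae_of_all _ fun a => hZ₁ (ζ a))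
    (hg₂.comp hζ).aestronglyMeasurable (ae_of_all _ fun a => hZ₂ (ζ a))
    (integrable_integral_ofReal_mul hη h₁ hw₁ hw₁₁)
    (integrable_integral_ofReal_mul hη h₁ (by fun_prop) hw₂₁')
    (integrable_integral_ofReal_mul_mul hη h₁ h₂ hw₁ (by fun_prop) hw₁₁ hw₂₁')
    (integral_comp_mul_integral_ofReal_mul_eq_zero hη h₁ hmean hζ hindep
      hg₁ hZ₁ (by fun_prop) hw₂₁')
    (integral_comp_mul_integral_ofReal_mul_eq_zero hη h₁ hmean hζ hindep
      hg₂ hZ₂ hw₁ hw₁₁)]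
  rw [← integral_const_mul]
  congr with a
  rw [map_mul, mul_mul_mul_comm]

end RandomField

instance isFiniteMeasure_restrict_Dcube (d : ℕ) : IsFiniteMeasure (volume.restrict (Dcube d)) :=
  isFiniteMeasure_restrict.mpr isCompact_Icc.measure_lt_top.ne

lemma mem_Dcube_of_sub_mem {d : ℕ} {t z : Fin d → ℝ}
    (ht : t - z ∈ Set.Icc (fun _ => -(1/2 : ℝ)) (fun _ => (1/2 : ℝ)))
    (hz : z ∈ Set.Icc (fun _ => -(1/2 : ℝ)) (fun _ => (1/2 : ℝ))) : t ∈ Dcube d := by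
  constructor <;> intro j
  · linarith [ht.1 j, hz.1 j, show (t - z) j = t j - z j from rfl]
  · linarith [ht.2 j, hz.2 j, show (t - z) j = t j - z j from rfl]

lemma setIntegral_comp_sub_mul_fourierKernel {d : ℕ} {s : Set (Fin d → ℝ)}
    {g : (Fin d → ℝ) → ℂ} {z : Fin d → ℝ} (hg : ∀ t ∉ s, g (t - z) = 0) (ω : Fin d → ℝ) :
    ∫ t in s, g (t - z) * fourierKernel ω t = ft g ω * fourierKernel ω z := by
  rw [setIntegral_eq_integral_of_forall_compl_eq_zero fun t ht => by rw [hg t ht, zero_mul]]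
  calc ∫ t, g (t - z) * fourierKernel ω t
      = ∫ t, g (t - z) * fourierKernel ω (t - z + z) := by simp only [sub_add_cancel]
    _ = ∫ t, g t * fourierKernel ω (t + z) :=
      integral_sub_right_eq_self (fun t => g t * fourierKernel ω (t + z)) z
    _ = ft g ω * fourierKernel ω z := by
      simp only [fourierKernel_add, ← mul_assoc]
      exact integral_mul_const _ _

lemma setIntegral_Dcube_comp_sub_add {d : ℕ} {f h : (Fin d → ℝ) → ℝ} {M : ℝ} {z ω : Fin d → ℝ}
    (hf_meas : Measurable f) (hf_bdd : ∀ t, |f t| ≤ M)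
    (hf_supp : ∀ t : Fin d → ℝ,
      t ∉ Set.Icc (fun _ => -(1/2 : ℝ)) (fun _ => (1/2 : ℝ)) → f t = 0)
    (hz : z ∈ Set.Icc (fun _ => -(1/2 : ℝ)) (fun _ => (1/2 : ℝ)))
    (hh : Integrable (fun t => (h t : ℂ) * fourierKernel ω t) (volume.restrict (Dcube d))) :
    ∫ t in Dcube d, ((f (t - z) + h t : ℝ) : ℂ) * fourierKernel ω t =
      ft (fun t => (f t : ℂ)) ω * fourierKernel ω z +
        ∫ t in Dcube d, (h t : ℂ) * fourierKernel ω t := by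
  have hf : Integrable (fun t => (f (t - z) : ℂ) * fourierKernel ω t) (volume.restrict (Dcube d)) :=
    Integrable.of_bound (by fun_prop : Measurable fun t => (f (t - z) : ℂ) *
      fourierKernel ω t).aestronglyMeasurable M <| ae_of_all _ fun t => by
      rw [norm_mul, norm_fourierKernel, mul_one, Complex.norm_real, Real.norm_eq_abs]
      exact hf_bdd _
  have hf_shift : ∀ t ∉ Dcube d, (f (t - z) : ℂ) = 0 := fun t ht => by
    rw [hf_supp _ fun hmem => ht (mem_Dcube_of_sub_mem hmem hz), Complex.ofReal_zero]
  simp only [Complex.ofReal_add, add_mul]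
  rw [integral_add hf hh, setIntegral_comp_sub_mul_fourierKernel (g := fun t => (f t : ℂ)) hf_shift]

theorem mra_second_order_statistics_general
    (d : ℕ)
    (Ω : Type*) [MeasurableSpace Ω] (μ : Measure Ω) [IsProbabilityMeasure μ]
    (ζ : Ω → Fin d → ℝ) (hζ_meas : Measurable ζ)
    (hζ_supp : ∀ᵐ a ∂μ, ζ a ∈ Set.Icc (fun _ => -(1/2 : ℝ)) (fun _ => (1/2 : ℝ)))
    (η : Ω → (Fin d → ℝ) → ℝ)
    (hη_meas : Measurable (Function.uncurry η))
    (hindep : IndepFun ζ η μ)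
    (f : (Fin d → ℝ) → ℝ) (hf_meas : Measurable f)
    (M : ℝ) (hf_bdd : ∀ t, |f t| ≤ M)
    (hf_supp : ∀ t : Fin d → ℝ,
      t ∉ Set.Icc (fun _ => -(1/2 : ℝ)) (fun _ => (1/2 : ℝ)) → f t = 0)
    (hη_mean : ∀ t ∈ Dcube d, (∫ a, η a t ∂μ) = 0)
    (hη_int2 : (∫⁻ q in (Dcube d) ×ˢ (Dcube d),
        ∫⁻ a, ENNReal.ofReal |η a q.1 * η a q.2| ∂μ) < ⊤)
    (hη_int1 : (∫⁻ t in Dcube d, ∫⁻ a, ENNReal.ofReal |η a t| ∂μ) < ⊤)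
    (yft ηft : Ω → (Fin d → ℝ) → ℂ)
    (hyft : ∀ a : Ω, ∀ ω : Fin d → ℝ,
      yft a ω = ∫ t in Dcube d,
        ((f (t - ζ a) + η a t : ℝ) : ℂ) * Complex.exp (-Complex.I * ((∑ j, t j * ω j : ℝ) : ℂ)))
    (hηft : ∀ a : Ω, ∀ ω : Fin d → ℝ,
      ηft a ω = ∫ t in Dcube d,
        ((η a t : ℝ) : ℂ) * Complex.exp (-Complex.I * ((∑ j, t j * ω j : ℝ) : ℂ))) :
    ∀ ω₁ ω₂ : Fin d → ℝ,
      (∫ a, yft a ω₁ * (starRingEnd ℂ) (yft a ω₂) ∂μ) =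
        ft (fun t => (f t : ℂ)) ω₁ * (starRingEnd ℂ) (ft (fun t => (f t : ℂ)) ω₂) *
          (∫ a, Complex.exp (-Complex.I * ((∑ j, (ω₁ j - ω₂ j) * ζ a j : ℝ) : ℂ)) ∂μ) +
        (∫ a, ηft a ω₁ * (starRingEnd ℂ) (ηft a ω₂) ∂μ) := by
  intro ω₁ ω₂
  obtain rfl : ηft = fun a ω => ∫ t in Dcube d, (η a t : ℂ) * fourierKernel ω t :=
    funext₂ hηft
  have hη₁ : ∫⁻ t, ∫⁻ a, ENNReal.ofReal |η a t| ∂μ ∂(volume.restrict (Dcube d)) < ⊤ :=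
    hη_int1
  have hη₂ : ∫⁻ q, ∫⁻ a, ENNReal.ofReal |η a q.1 * η a q.2| ∂μ
      ∂((volume.restrict (Dcube d)).prod (volume.restrict (Dcube d))) < ⊤ := by
    rwa [Measure.prod_restrict, ← Measure.volume_eq_prod]
  have hmean : ∀ᵐ t ∂(volume.restrict (Dcube d)), ∫ a, η a t ∂μ = 0 :=
    (ae_restrict_mem measurableSet_Icc).mono hη_mean
  have hK : ∀ ω t : Fin d → ℝ, ‖fourierKernel ω t‖ ≤ 1 := fun ω t => (norm_fourierKernel ω t).le
  have hy : ∀ ω, ∀ᵐ a ∂μ, yft a ω = ft (fun t => (f t : ℂ)) ω * fourierKernel ω (ζ a) +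
      ∫ t in Dcube d, (η a t : ℂ) * fourierKernel ω t := fun ω => by
    filter_upwards [hζ_supp, (integrable_uncurry_ofReal hη_meas hη₁).prod_right_ae]
      with a hζa hηa
    rw [hyft]
    exact setIntegral_Dcube_comp_sub_add (h := η a) hf_meas hf_bdd hf_supp hζa (hηa.mul_bdd
      (continuous_fourierKernel ω).aestronglyMeasurable (ae_of_all _ (hK ω)))
  rw [integral_congr_ae ((hy ω₁).mp ((hy ω₂).mono fun a h₂ h₁ => by rw [h₁, h₂])),
    integral_add_mul_conj_add_of_indepFun hη_meas hη₁ hη₂ hmean hζ_meas hindep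
      (by fun_prop) (by fun_prop) (hK ω₁) (hK ω₂) (by fun_prop) (by fun_prop) (hK ω₁) (hK ω₂)]
  simp only [fourierKernel_mul_conj]

/-- **Second-order statistics of the MRA observation in the Fourier domain.**
For `y(t) = f(t - ζ) + η(t)` with `ζ` and the centered noise field `η` independent,
`E[y^ft(ω₁) conj(y^ft(ω₂))] = f^ft(ω₁) conj(f^ft(ω₂)) E[e^{-i(ω₁-ω₂)·ζ}]
  + E[η^ft(ω₁) conj(η^ft(ω₂))]`. -/
theorem mra_second_order_statistics
    (d : ℕ)
    (Ω : Type*) [MeasurableSpace Ω] (μ : Measure Ω) [IsProbabilityMeasure μ]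
    (ζ : Ω → Fin d → ℝ) (hζ_meas : Measurable ζ)
    (hζ_supp : ∀ᵐ a ∂μ, ζ a ∈ Set.Icc (fun _ => -(1/2 : ℝ)) (fun _ => (1/2 : ℝ)))
    (η : Ω → (Fin d → ℝ) → ℝ)
    (hη_meas : Measurable (Function.uncurry η))
    (hη_supp : ∀ a : Ω, ∀ t : Fin d → ℝ, t ∉ Dcube d → η a t = 0)
    (hindep : IndepFun ζ η μ)
    (f : (Fin d → ℝ) → ℝ) (hf_meas : Measurable f)
    (M : ℝ) (hf_bdd : ∀ t, |f t| ≤ M)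
    (hf_supp : ∀ t : Fin d → ℝ,
      t ∉ Set.Icc (fun _ => -(1/2 : ℝ)) (fun _ => (1/2 : ℝ)) → f t = 0)
    (hη_mean : ∀ t ∈ Dcube d, (∫ a, η a t ∂μ) = 0)
    (hη_int2 : (∫⁻ q in (Dcube d) ×ˢ (Dcube d),
        ∫⁻ a, ENNReal.ofReal |η a q.1 * η a q.2| ∂μ) < ⊤)
    (hη_int1 : (∫⁻ t in Dcube d, ∫⁻ a, ENNReal.ofReal |η a t| ∂μ) < ⊤)
    (yft ηft : Ω → (Fin d → ℝ) → ℂ)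
    (hyft : ∀ a : Ω, ∀ ω : Fin d → ℝ,
      yft a ω = ∫ t in Dcube d,
        ((f (t - ζ a) + η a t : ℝ) : ℂ) * Complex.exp (-Complex.I * ((∑ j, t j * ω j : ℝ) : ℂ)))
    (hηft : ∀ a : Ω, ∀ ω : Fin d → ℝ,
      ηft a ω = ∫ t in Dcube d,
        ((η a t : ℝ) : ℂ) * Complex.exp (-Complex.I * ((∑ j, t j * ω j : ℝ) : ℂ))) :
    ∀ ω₁ ω₂ : Fin d → ℝ,
      (∫ a, yft a ω₁ * (starRingEnd ℂ) (yft a ω₂) ∂μ) =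
        ft (fun t => (f t : ℂ)) ω₁ * (starRingEnd ℂ) (ft (fun t => (f t : ℂ)) ω₂) *
          (∫ a, Complex.exp (-Complex.I * ((∑ j, (ω₁ j - ω₂ j) * ζ a j : ℝ) : ℂ)) ∂μ) +
        (∫ a, ηft a ω₁ * (starRingEnd ℂ) (ηft a ω₂) ∂μ) :=
  mra_second_order_statistics_general d Ω μ ζ hζ_meas hζ_supp η hη_meas hindep f hf_meas M hf_bdd
    hf_supp hη_mean hη_int2 hη_int1 yft ηft hyft hηft
end
end

section
/- Let p be a positive even integer and let K : ℝ^d → ℝ be integrable with ∫_{ℝ^d} K(t) dt = 1, ∫_{ℝ^d} t^ν K(t) dt = 0 for all multi-indices ν with 1 ≤ |ν| ≤ p−1, and C_K := ∫_{ℝ^d} ‖t‖₂^p |K(t)| dt < ∞. Then for every u ∈ ℝ^d: |K^ft(u) − 1| ≤ (C_K / p!) ‖u‖₂^p. -/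
/-!
Write `K^ft(u) - 1 = ∫ K(t) (e^{-i t·u} - ∑_{k<p} (-i t·u)^k / k!) dt`. The subtracted Taylor
polynomial integrates to `∫ K = 1`: by the multinomial expansion, each `∫ (t·u)^k K(t) dt` with
`1 ≤ k < p` is a combination of the vanishing moments `∫ t^ν K(t) dt`, `|ν| = k`. The Taylor
remainder of `e^{ix}` of order `p` is at most `|x|^p / p!` (induct on `p`: its derivative is `i`
times the remainder of order `p - 1`), and `|t·u| ≤ ‖t‖₂ ‖u‖₂`, so the integrand is bounded by
`‖u‖₂^p / p! · ‖t‖₂^p |K(t)|`.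
-/

open MeasureTheory Complex

noncomputable section

/-- Euclidean (`ℓ²`) norm on `Fin d → ℝ`. -/
def en2 {d : ℕ} (ω : Fin d → ℝ) : ℝ :=
  Real.sqrt (∑ j, (ω j) ^ 2)

open Finset
open scoped Nat ComplexConjugate

theorem hasDerivAt_sum_range_pow_div_factorial (n : ℕ) (z : ℂ) :
    HasDerivAt (fun z : ℂ => ∑ k ∈ range (n + 1), z ^ k / k !)
      (∑ k ∈ range n, z ^ k / k !) z := by
  induction n with
  | zero => simpa using hasDerivAt_const z (1 : ℂ)
  | succ n ih =>
    simp_rw [sum_range_succ _ (n + 1)]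
    refine (ih.add ((hasDerivAt_pow (n + 1) z).div_const _)).congr_deriv ?_
    rw [sum_range_succ, Nat.factorial_succ]
    push_cast
    field_simp

theorem hasDerivAt_cexp_mul_I_sub_sum (n : ℕ) (y : ℝ) :
    HasDerivAt (fun y : ℝ => exp (y * I) - ∑ k ∈ range (n + 1), (y * I) ^ k / k !)
      ((exp (y * I) - ∑ k ∈ range n, (y * I) ^ k / k !) * I) y := by
  have hI : HasDerivAt (fun y : ℝ => (y : ℂ) * I) I y := by
    simpa using (hasDerivAt_id y).ofReal_comp.mul_const I
  exact ((hasDerivAt_exp _).sub (hasDerivAt_sum_range_pow_div_factorial n _)).comp y hI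

theorem norm_cexp_mul_I_sub_sum_le_of_nonneg (n : ℕ) {x : ℝ} (hx : 0 ≤ x) :
    ‖exp (x * I) - ∑ k ∈ range n, (x * I) ^ k / (k ! : ℂ)‖ ≤ x ^ n / n ! := by
  induction n generalizing x with
  | zero => simp [norm_exp_ofReal_mul_I]
  | succ n ih =>
    have hB (y : ℝ) : HasDerivAt (fun y : ℝ => y ^ (n + 1) / (n + 1) !) (y ^ n / n !) y := by
      refine ((hasDerivAt_pow (n + 1) y).div_const ((n + 1)! : ℝ)).congr_deriv ?_
      rw [Nat.factorial_succ]; push_cast; field_simp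
    refine image_norm_le_of_norm_deriv_right_le_deriv_boundary
      (fun y _ => (hasDerivAt_cexp_mul_I_sub_sum n y).continuousAt.continuousWithinAt)
      (fun y _ => (hasDerivAt_cexp_mul_I_sub_sum n y).hasDerivWithinAt)
      (by simp [sum_range_succ']) hB (fun y hy => ?_) ⟨hx, le_rfl⟩
    rw [norm_mul, norm_I, mul_one]
    exact ih hy.1

theorem norm_cexp_mul_I_sub_sum_le (n : ℕ) (x : ℝ) :
    ‖exp (x * I) - ∑ k ∈ range n, (x * I) ^ k / (k ! : ℂ)‖ ≤ |x| ^ n / n ! := by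
  rcases le_total 0 x with hx | hx
  · rw [abs_of_nonneg hx]
    exact norm_cexp_mul_I_sub_sum_le_of_nonneg n hx
  · have hconj : exp (x * I) - ∑ k ∈ range n, (x * I) ^ k / k ! =
        conj (exp ((-x : ℝ) * I) - ∑ k ∈ range n, ((-x : ℝ) * I) ^ k / k !) := by
      simp [← exp_conj]
    rw [hconj, norm_conj, abs_of_nonpos hx]
    exact norm_cexp_mul_I_sub_sum_le_of_nonneg n (neg_nonneg.2 hx)

theorem pow_le_one_add_pow {x : ℝ} (hx : 0 ≤ x) {m n : ℕ} (hmn : m ≤ n) :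
    x ^ m ≤ 1 + x ^ n := by
  rcases le_total x 1 with h | h
  · linarith [pow_le_one₀ (n := m) hx h, pow_nonneg hx n]
  · linarith [pow_le_pow_right₀ h hmn]

section Euclidean

variable {d : ℕ}

theorem en2_nonneg (t : Fin d → ℝ) : 0 ≤ en2 t := Real.sqrt_nonneg _

theorem abs_apply_le_en2 (t : Fin d → ℝ) (j : Fin d) : |t j| ≤ en2 t := by
  rw [← Real.sqrt_sq_eq_abs]
  exact Real.sqrt_le_sqrt (single_le_sum (f := fun j => t j ^ 2) (fun i _ => sq_nonneg _)
    (mem_univ j))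

theorem abs_prod_pow_le_en2_pow (t : Fin d → ℝ) (ν : Fin d → ℕ) :
    |∏ j, t j ^ ν j| ≤ en2 t ^ ∑ j, ν j := by
  rw [abs_prod, ← prod_pow_eq_pow_sum]
  gcongr with j
  rw [abs_pow]
  exact pow_le_pow_left₀ (abs_nonneg _) (abs_apply_le_en2 t j) _

theorem abs_dotProduct_le_en2_mul_en2 (t u : Fin d → ℝ) : |t ⬝ᵥ u| ≤ en2 t * en2 u := by
  rw [en2, en2, ← Real.sqrt_mul (sum_nonneg fun j _ => sq_nonneg _), ← Real.sqrt_sq_eq_abs]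
  exact Real.sqrt_le_sqrt (sum_mul_sq_le_sq_mul_sq univ t u)

theorem norm_cexp_neg_I_mul_dotProduct_sub_sum_le (n : ℕ) (t u : Fin d → ℝ) :
    ‖exp (-I * (t ⬝ᵥ u : ℝ)) - ∑ k ∈ range n, (-I * (t ⬝ᵥ u : ℝ)) ^ k / (k ! : ℂ)‖ ≤
      (en2 t * en2 u) ^ n / n ! := by
  have hneg : -I * (t ⬝ᵥ u : ℝ) = ((-(t ⬝ᵥ u) : ℝ) : ℂ) * I := by push_cast; ring
  rw [hneg]
  refine (norm_cexp_mul_I_sub_sum_le n _).trans ?_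
  rw [abs_neg]
  gcongr
  exact abs_dotProduct_le_en2_mul_en2 t u

end Euclidean

section Moments

variable {d p : ℕ} {μ : Measure (Fin d → ℝ)} {K : (Fin d → ℝ) → ℝ}

theorem integrable_mul_of_abs_le_one_add_en2_pow (hK : Integrable K μ)
    (hKp : Integrable (fun t => en2 t ^ p * |K t|) μ) {g : (Fin d → ℝ) → ℝ}
    (hg : AEStronglyMeasurable g μ) {c : ℝ} (hbound : ∀ t, |g t| ≤ c * (1 + en2 t ^ p)) :
    Integrable (fun t => g t * K t) μ := by
  refine Integrable.mono' ((hK.abs.add hKp).const_mul c) (hg.mul hK.aestronglyMeasurable)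
    (ae_of_all _ fun t => ?_)
  calc ‖g t * K t‖ = |g t| * |K t| := by rw [Real.norm_eq_abs, abs_mul]
    _ ≤ c * (1 + en2 t ^ p) * |K t| := by gcongr; exact hbound t
    _ = c * (|K t| + en2 t ^ p * |K t|) := by ring

theorem integrable_monomial_mul (hK : Integrable K μ)
    (hKp : Integrable (fun t => en2 t ^ p * |K t|) μ) {ν : Fin d → ℕ} (hν : ∑ j, ν j ≤ p) :
    Integrable (fun t => (∏ j, t j ^ ν j) * K t) μ := by
  refine integrable_mul_of_abs_le_one_add_en2_pow hK hKp
    (Continuous.aestronglyMeasurable (by fun_prop)) (c := 1) fun t => ?_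
  rw [one_mul]
  exact (abs_prod_pow_le_en2_pow t ν).trans (pow_le_one_add_pow (en2_nonneg t) hν)

theorem integrable_dotProduct_pow_mul (hK : Integrable K μ)
    (hKp : Integrable (fun t => en2 t ^ p * |K t|) μ) (u : Fin d → ℝ) {k : ℕ} (hk : k ≤ p) :
    Integrable (fun t => (t ⬝ᵥ u) ^ k * K t) μ := by
  refine integrable_mul_of_abs_le_one_add_en2_pow hK hKp
    (Continuous.aestronglyMeasurable (by fun_prop)) (c := en2 u ^ k) fun t => ?_
  calc |(t ⬝ᵥ u) ^ k| ≤ (en2 t * en2 u) ^ k := by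
        rw [abs_pow]
        exact pow_le_pow_left₀ (abs_nonneg _) (abs_dotProduct_le_en2_mul_en2 t u) k
    _ = en2 u ^ k * en2 t ^ k := by ring
    _ ≤ en2 u ^ k * (1 + en2 t ^ p) := by
        gcongr
        · exact pow_nonneg (en2_nonneg u) k
        · exact pow_le_one_add_pow (en2_nonneg t) hk

theorem integral_dotProduct_pow_mul (u : Fin d → ℝ) {k : ℕ}
    (hint : ∀ ν ∈ piAntidiag univ k, Integrable (fun t => (∏ j, t j ^ ν j) * K t) μ) :
    ∫ t, (t ⬝ᵥ u) ^ k * K t ∂μ =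
      ∑ ν ∈ piAntidiag univ k,
        (Nat.multinomial univ ν * ∏ j, u j ^ ν j) * ∫ t, (∏ j, t j ^ ν j) * K t ∂μ := by
  have hexpand (t : Fin d → ℝ) : (t ⬝ᵥ u) ^ k * K t =
      ∑ ν ∈ piAntidiag univ k,
        (Nat.multinomial univ ν * ∏ j, u j ^ ν j) * ((∏ j, t j ^ ν j) * K t) := by
    rw [dotProduct, sum_pow_eq_sum_piAntidiag, sum_mul]
    refine sum_congr rfl fun ν _ => ?_
    simp_rw [mul_pow, prod_mul_distrib]
    ring
  simp_rw [hexpand]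
  rw [integral_finsetSum _ fun ν hν => (hint ν hν).const_mul _]
  simp_rw [integral_const_mul]

theorem integral_dotProduct_pow_mul_eq_zero (hK : Integrable K μ)
    (hKp : Integrable (fun t => en2 t ^ p * |K t|) μ)
    (hmom : ∀ ν : Fin d → ℕ, 1 ≤ ∑ j, ν j → ∑ j, ν j ≤ p - 1 →
      ∫ t, (∏ j, t j ^ ν j) * K t ∂μ = 0)
    (u : Fin d → ℝ) {k : ℕ} (hk : 1 ≤ k) (hkp : k < p) :
    ∫ t, (t ⬝ᵥ u) ^ k * K t ∂μ = 0 := by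
  rw [integral_dotProduct_pow_mul u fun ν hν => integrable_monomial_mul hK hKp
    ((mem_piAntidiag.1 hν).1.trans_le hkp.le)]
  refine sum_eq_zero fun ν hν => ?_
  have hdeg : ∑ j, ν j = k := (mem_piAntidiag.1 hν).1
  rw [hmom ν (hdeg ▸ hk) (hdeg ▸ Nat.le_sub_one_of_lt hkp), mul_zero]

end Moments

theorem ofReal_mul_sum_pow_div_factorial {α : Type*} {K f : α → ℝ} {n : ℕ} (c : ℂ) (a : α) :
    (K a : ℂ) * ∑ k ∈ range n, (c * f a) ^ k / k ! =
      ∑ k ∈ range n, c ^ k / k ! * ((f a ^ k * K a : ℝ) : ℂ) := by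
  rw [mul_sum]
  refine sum_congr rfl fun k _ => ?_
  push_cast
  ring

section Taylor

variable {α : Type*} [MeasurableSpace α] {μ : Measure α} {K f : α → ℝ} {n : ℕ}

theorem integrable_ofReal_mul_cexp_neg_I_mul (hK : Integrable K μ)
    (hf : AEStronglyMeasurable f μ) :
    Integrable (fun a => (K a : ℂ) * exp (-I * f a)) μ := by
  refine hK.mono (hK.ofReal.aestronglyMeasurable.mul (by fun_prop)) (ae_of_all _ fun a => ?_)
  rw [norm_mul, norm_real, mul_comm (-I), mul_neg, ← neg_mul, ← ofReal_neg,
    norm_exp_ofReal_mul_I, mul_one]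

theorem integrable_ofReal_mul_sum_pow_div_factorial
    (hint : ∀ k < n, Integrable (fun a => f a ^ k * K a) μ) (c : ℂ) :
    Integrable (fun a => (K a : ℂ) * ∑ k ∈ range n, (c * f a) ^ k / k !) μ := by
  simp_rw [ofReal_mul_sum_pow_div_factorial]
  exact integrable_finsetSum _ fun k hk => ((hint k (mem_range.1 hk)).ofReal).const_mul _

theorem integral_ofReal_mul_sum_pow_div_factorial (hn : 0 < n)
    (hint : ∀ k < n, Integrable (fun a => f a ^ k * K a) μ)
    (hzero : ∀ k, 1 ≤ k → k < n → ∫ a, f a ^ k * K a ∂μ = 0) (c : ℂ) :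
    ∫ a, (K a : ℂ) * ∑ k ∈ range n, (c * f a) ^ k / k ! ∂μ = ((∫ a, K a ∂μ : ℝ) : ℂ) := by
  simp_rw [ofReal_mul_sum_pow_div_factorial]
  rw [integral_finsetSum _ fun k hk => ((hint k (mem_range.1 hk)).ofReal).const_mul _]
  simp_rw [integral_const_mul, integral_complex_ofReal]
  rw [sum_eq_single_of_mem 0 (mem_range.2 hn) fun k hk hk0 => ?_]
  · simp
  · rw [hzero k (Nat.one_le_iff_ne_zero.2 hk0) (mem_range.1 hk)]
    simp

end Taylor

theorem kernel_ft_taylor_bound_general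
    (d : ℕ) (p : ℕ) (hp_pos : 0 < p)
    (K : (Fin d → ℝ) → ℝ) (hK_int : Integrable K)
    (hK_total : (∫ t : Fin d → ℝ, K t) = 1)
    (hK_moments : ∀ ν : Fin d → ℕ, 1 ≤ ∑ j, ν j → ∑ j, ν j ≤ p - 1 →
      (∫ t : Fin d → ℝ, (∏ j, t j ^ ν j) * K t) = 0)
    (CK : ℝ)
    (hCK_int : Integrable (fun t : Fin d → ℝ => en2 t ^ p * |K t|))
    (hCK : (∫ t : Fin d → ℝ, en2 t ^ p * |K t|) = CK) :
    ∀ u : Fin d → ℝ,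
      ‖ft (fun t => (K t : ℂ)) u - 1‖ ≤
        (CK / (Nat.factorial p)) * en2 u ^ p := by
  intro u
  have hK_exp := integrable_ofReal_mul_cexp_neg_I_mul (f := (· ⬝ᵥ u)) hK_int
    (Continuous.aestronglyMeasurable (by fun_prop))
  have hpow_int (k : ℕ) (hk : k < p) := integrable_dotProduct_pow_mul hK_int hCK_int u hk.le
  have hK_taylor := integrable_ofReal_mul_sum_pow_div_factorial hpow_int (-I)
  have h_taylor : ∫ t, (K t : ℂ) * ∑ k ∈ range p, (-I * (t ⬝ᵥ u : ℝ)) ^ k / k ! = 1 := by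
    rw [integral_ofReal_mul_sum_pow_div_factorial hp_pos hpow_int
      (fun k hk hkp => integral_dotProduct_pow_mul_eq_zero hK_int hCK_int hK_moments u hk hkp),
      hK_total, ofReal_one]
  have h_remainder (t : Fin d → ℝ) :
      ‖(K t : ℂ) * (exp (-I * (t ⬝ᵥ u : ℝ)) - ∑ k ∈ range p, (-I * (t ⬝ᵥ u : ℝ)) ^ k / k !)‖ ≤
        en2 u ^ p / p ! * (en2 t ^ p * |K t|) := by
    rw [norm_mul, norm_real, Real.norm_eq_abs]
    calc _ ≤ |K t| * ((en2 t * en2 u) ^ p / p !) := by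
          gcongr; exact norm_cexp_neg_I_mul_dotProduct_sub_sum_le p t u
      _ = en2 u ^ p / p ! * (en2 t ^ p * |K t|) := by ring
  calc ‖ft (fun t => (K t : ℂ)) u - 1‖
      = ‖∫ t, (K t : ℂ) * (exp (-I * (t ⬝ᵥ u : ℝ)) -
          ∑ k ∈ range p, (-I * (t ⬝ᵥ u : ℝ)) ^ k / k !)‖ := by
        have hft : ft (fun t => (K t : ℂ)) u = ∫ t, (K t : ℂ) * exp (-I * (t ⬝ᵥ u : ℝ)) := rfl
        rw [hft, ← h_taylor, ← integral_sub hK_exp hK_taylor]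
        simp_rw [mul_sub]
    _ ≤ ∫ t, en2 u ^ p / p ! * (en2 t ^ p * |K t|) :=
        norm_integral_le_of_norm_le (hCK_int.const_mul _) (ae_of_all _ h_remainder)
    _ = CK / p ! * en2 u ^ p := by rw [integral_const_mul, hCK]; ring

/-- **Taylor bound for a kernel of order `p`.** If `K` has unit mass, vanishing moments
of orders `1,…,p-1`, and finite `p`-th moment `C_K = ∫ ‖t‖₂^p |K(t)| dt`, then
`|K^ft(u) - 1| ≤ (C_K / p!) ‖u‖₂^p` for every `u ∈ ℝ^d`. -/
theorem kernel_ft_taylor_bound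
    (d : ℕ) (p : ℕ) (hp_even : Even p) (hp_pos : 0 < p)
    (K : (Fin d → ℝ) → ℝ) (hK_int : Integrable K)
    (hK_total : (∫ t : Fin d → ℝ, K t) = 1)
    (hK_moments : ∀ ν : Fin d → ℕ, 1 ≤ ∑ j, ν j → ∑ j, ν j ≤ p - 1 →
      (∫ t : Fin d → ℝ, (∏ j, t j ^ ν j) * K t) = 0)
    (CK : ℝ)
    (hCK_int : Integrable (fun t : Fin d → ℝ => en2 t ^ p * |K t|))
    (hCK : (∫ t : Fin d → ℝ, en2 t ^ p * |K t|) = CK) :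
    ∀ u : Fin d → ℝ,
      ‖ft (fun t => (K t : ℂ)) u - 1‖ ≤
        (CK / (Nat.factorial p)) * en2 u ^ p :=
  kernel_ft_taylor_bound_general d p hp_pos K hK_int hK_total hK_moments CK hCK_int hCK
end
end

section
/- Assume the vanishing model assumption (d = 1) with constants β, C, B, ε_max. Then there exist constants c₀ > 0 and c₁ > 0 depending only on β, C, B such that for every h ∈ (0,1), every ε̌ ∈ [0, min(ε_max, c₀ h^{2β})], and every ω ∈ [0, h^{−1}] such that some zero ξ of f^ft satisfies |ω − ξ| ≤ ε̌ and [ξ − ε̌, ξ + ε̌] ⊆ [0, h^{−1}]: the second derivative of the power spectrum satisfies |P''(ω)| ≥ c₁ h^{2β} ‖f‖_∞². -/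
open MeasureTheory Complex

noncomputable section

/-- Fourier transform `f^ft(ω) = ∫_ℝ f(t) e^{-i t ω} dt`. -/
def ftR (f : ℝ → ℝ) (ω : ℝ) : ℂ :=
  ∫ t : ℝ, (f t : ℂ) * Complex.exp (-Complex.I * t * ω)

/-- `‖f‖_∞ = sup_t |f(t)|`. -/
def supNormR (f : ℝ → ℝ) : ℝ :=
  sSup (Set.range fun t => |f t|)

/-- The power spectrum `P(ω) = |f^ft(ω)|²`. -/
def powerSpec (f : ℝ → ℝ) (ω : ℝ) : ℝ :=
  ‖ftR f ω‖ ^ 2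

/-- **The vanishing model assumption (d = 1).**
`f` is bounded, measurable, supported on `[-1/2,1/2]`; `f^ft` is nonvanishing on
`[-1,1]` and for `ω ≥ 1` decomposes as `f^ft(ω) = o_f(ω) ω^{-β}` with an oscillatory
factor `o_f` that is twice differentiable with derivatives bounded by `C‖f‖_∞`; the
zeros of `f^ft` are isolated and simple; and the oscillations are regular: away from
the zeros `|o_f|` is bounded below linearly in the distance, and near the zeros
`|o_f'|` is bounded below. -/
structure VanishingModel (f : ℝ → ℝ) (o : ℝ → ℂ) (β C L B εmax : ℝ) : Prop where
  f_meas : Measurable f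
  f_bdd : ∃ M : ℝ, ∀ t, |f t| ≤ M
  f_supp : ∀ t : ℝ, t ∉ Set.Icc (-(1/2) : ℝ) (1/2 : ℝ) → f t = 0
  beta_ge : 1 ≤ β
  C_pos : 0 < C
  L_pos : 0 < L
  B_pos : 0 < B
  eps_pos : 0 < εmax
  nonvanishing : ∀ ω : ℝ, |ω| ≤ 1 → ftR f ω ≠ 0
  decomposition : ∀ ω : ℝ, 1 ≤ ω → ftR f ω = o ω * ((ω ^ (-β) : ℝ) : ℂ)
  o_diff : Differentiable ℝ o
  o_diff2 : Differentiable ℝ (deriv o)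
  o_bounds : ∀ ℓ : ℕ, ℓ ≤ 2 → ∀ ω : ℝ, 1 ≤ ω →
    ‖iteratedDeriv ℓ o ω‖ ≤ C * supNormR f
  zeros_separated : ∀ ξ ξ' : ℝ, ftR f ξ = 0 → ftR f ξ' = 0 → ξ ≠ ξ' → 1 ≤ |ξ - ξ'|
  zeros_simple : ∀ ξ : ℝ, ftR f ξ = 0 → deriv (ftR f) ξ ≠ 0
  osc_lower : ∀ ε : ℝ, 0 ≤ ε → ε ≤ εmax → ∀ ω : ℝ, 1 ≤ ω →
    (∀ ξ : ℝ, ftR f ξ = 0 → ε ≤ |ω - ξ|) →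
    L * supNormR f * ε ≤ ‖o ω‖
  osc_deriv_lower : ∀ ε : ℝ, 0 ≤ ε → ε ≤ εmax → ∀ ω : ℝ, 1 ≤ ω →
    (∃ ξ : ℝ, ftR f ξ = 0 ∧ |ω - ξ| ≤ ε) →
    B * supNormR f ≤ ‖deriv o ω‖


/-!
Write `g k` for the `k`-th derivative of `f^ft`, the Fourier transform of `(-it)^k f(t)`; since `f`
lives on `[-1/2, 1/2]`, every `‖g k‖` is at most `‖f‖_∞`. Then `P'' = 2 (‖g 1‖² + ⟪g 0, g 2⟫)` and
`|P'''| ≤ 8 ‖f‖_∞²`. A zero `ξ ∈ [0, h⁻¹]` of `f^ft` lies beyond `1`, where `f^ft = o_f ω^{-β}`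
with `o_f(ξ) = 0`, so `g 1 ξ = o_f'(ξ) ξ^{-β}` and `P''(ξ) = 2 ‖g 1 ξ‖² ≥ 2 B² ‖f‖_∞² h^{2β}`.
Moving from `ξ` to `ω` by at most `ε̌ ≤ B² h^{2β} / 8` changes `P''` by at most `B² ‖f‖_∞² h^{2β}`.
-/

open scoped RealInnerProductSpace

section DerivativeChain

variable {E : Type*} [NormedAddCommGroup E] [InnerProductSpace ℝ E] {g : ℕ → ℝ → E}

theorem iteratedDeriv_two_norm_sq_of_hasDerivAt_succ
    (hg : ∀ k x, HasDerivAt (g k) (g (k + 1) x) x) (x : ℝ) :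
    iteratedDeriv 2 (fun y => ‖g 0 y‖ ^ 2) x = 2 * (‖g 1 x‖ ^ 2 + ⟪g 0 x, g 2 x⟫) := by
  have hd1 : deriv (fun y => ‖g 0 y‖ ^ 2) = fun y => 2 * ⟪g 0 y, g 1 y⟫ :=
    funext fun y => ((hg 0 y).norm_sq).deriv
  have hd2 : HasDerivAt (fun y => 2 * ⟪g 0 y, g 1 y⟫) (2 * (‖g 1 x‖ ^ 2 + ⟪g 0 x, g 2 x⟫)) x := by
    refine (((hg 0 x).inner ℝ (hg 1 x)).const_mul 2).congr_deriv ?_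
    rw [real_inner_self_eq_norm_sq]; ring
  rw [iteratedDeriv_succ, iteratedDeriv_one, hd1, hd2.deriv]

theorem abs_iteratedDeriv_two_norm_sq_sub_le {s : ℝ}
    (hg : ∀ k x, HasDerivAt (g k) (g (k + 1) x) x) (hs : ∀ k x, ‖g k x‖ ≤ s) (x y : ℝ) :
    |iteratedDeriv 2 (fun y => ‖g 0 y‖ ^ 2) x - iteratedDeriv 2 (fun y => ‖g 0 y‖ ^ 2) y| ≤
      8 * s ^ 2 * |x - y| := by
  simp only [iteratedDeriv_two_norm_sq_of_hasDerivAt_succ hg]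
  have hd3 : ∀ z, HasDerivAt (fun y => 2 * (‖g 1 y‖ ^ 2 + ⟪g 0 y, g 2 y⟫))
      (2 * (3 * ⟪g 1 z, g 2 z⟫ + ⟪g 0 z, g 3 z⟫)) z := fun z => by
    refine ((((hg 1 z).norm_sq).add ((hg 0 z).inner ℝ (hg 2 z))).const_mul 2).congr_deriv ?_
    rw [real_inner_comm (g 2 z)]; ring
  have hs0 : 0 ≤ s := (norm_nonneg _).trans (hs 0 0)
  have hbound : ∀ z, ‖2 * (3 * ⟪g 1 z, g 2 z⟫ + ⟪g 0 z, g 3 z⟫)‖ ≤ 8 * s ^ 2 := fun z => by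
    have h12 := abs_le.1 <| (abs_real_inner_le_norm (g 1 z) (g 2 z)).trans
      (mul_le_mul (hs 1 z) (hs 2 z) (norm_nonneg _) hs0)
    have h03 := abs_le.1 <| (abs_real_inner_le_norm (g 0 z) (g 3 z)).trans
      (mul_le_mul (hs 0 z) (hs 3 z) (norm_nonneg _) hs0)
    rw [Real.norm_eq_abs, abs_le]
    constructor <;> linarith [h12.1, h12.2, h03.1, h03.2]
  simpa [Real.norm_eq_abs] using Convex.norm_image_sub_le_of_norm_hasDerivWithin_le
    (fun z _ => (hd3 z).hasDerivWithinAt) (fun z _ => hbound z) convex_univ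
    (Set.mem_univ y) (Set.mem_univ x)

end DerivativeChain

def ftMoment (f : ℝ → ℝ) (k : ℕ) (ω : ℝ) : ℂ :=
  ∫ t : ℝ, (-I * t) ^ k * (f t : ℂ) * exp (-I * t * ω)

section FourierMoments

variable {f : ℝ → ℝ} {s : ℝ}

theorem ftMoment_zero (f : ℝ → ℝ) : ftMoment f 0 = ftR f := by
  funext ω; simp [ftMoment, ftR]

theorem norm_ftMoment_integrand_le (hfs : ∀ t, |f t| ≤ s)
    (hsupp : ∀ t ∉ Set.Icc (-(1/2) : ℝ) (1/2), f t = 0) (k : ℕ) (ω t : ℝ) :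
    ‖(-I * t) ^ k * (f t : ℂ) * exp (-I * t * ω)‖ ≤
      (Set.Icc (-(1/2) : ℝ) (1/2)).indicator (fun _ => s) t := by
  by_cases ht : t ∈ Set.Icc (-(1/2) : ℝ) (1/2)
  · have hexp : ‖exp (-I * t * ω)‖ = 1 := by
      rw [show -I * t * ω = ((-(t * ω) : ℝ) : ℂ) * I by push_cast; ring, norm_exp_ofReal_mul_I]
    have htk : |t| ^ k ≤ 1 :=
      pow_le_one₀ (abs_nonneg t) (abs_le.2 ⟨by linarith [ht.1], by linarith [ht.2]⟩)
    rw [Set.indicator_of_mem ht, norm_mul, norm_mul, hexp, mul_one, norm_pow, norm_mul, norm_neg,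
      norm_I, one_mul]
    simp only [norm_real, Real.norm_eq_abs]
    exact (mul_le_of_le_one_left (abs_nonneg _) htk).trans (hfs t)
  · rw [Set.indicator_of_notMem ht, hsupp t ht]
    simp

theorem integrable_indicator_Icc_const {a b : ℝ} :
    Integrable ((Set.Icc a b).indicator fun _ => s) :=
  (integrable_indicator_iff measurableSet_Icc).2 (integrableOn_const measure_Icc_lt_top.ne)

theorem aestronglyMeasurable_ftMoment_integrand (hf : Measurable f) (k : ℕ) (ω : ℝ) :
    AEStronglyMeasurable fun t : ℝ => (-I * t) ^ k * (f t : ℂ) * exp (-I * t * ω) := by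
  fun_prop

theorem hasDerivAt_ftMoment (hf : Measurable f) (hfs : ∀ t, |f t| ≤ s)
    (hsupp : ∀ t ∉ Set.Icc (-(1/2) : ℝ) (1/2), f t = 0) (k : ℕ) (ω : ℝ) :
    HasDerivAt (ftMoment f k) (ftMoment f (k + 1) ω) ω := by
  have hdom := norm_ftMoment_integrand_le hfs hsupp
  refine (hasDerivAt_integral_of_dominated_loc_of_deriv_le (Metric.ball_mem_nhds ω one_pos)
    (.of_forall fun x => aestronglyMeasurable_ftMoment_integrand hf k x)
    (integrable_indicator_Icc_const.mono' (aestronglyMeasurable_ftMoment_integrand hf k ω)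
      (.of_forall (hdom k ω)))
    (aestronglyMeasurable_ftMoment_integrand hf (k + 1) ω)
    (.of_forall fun t x _ => hdom (k + 1) x t) integrable_indicator_Icc_const
    (.of_forall fun t x _ => ?_)).2
  have hlin : HasDerivAt (fun y : ℝ => -I * t * y) (-I * t) x := by
    simpa using (ofRealCLM.hasDerivAt (x := x)).const_mul (-I * t)
  exact (hlin.cexp.const_mul ((-I * t) ^ k * (f t : ℂ))).congr_deriv (by ring)

theorem norm_ftMoment_le (hfs : ∀ t, |f t| ≤ s)
    (hsupp : ∀ t ∉ Set.Icc (-(1/2) : ℝ) (1/2), f t = 0) (k : ℕ) (ω : ℝ) :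
    ‖ftMoment f k ω‖ ≤ s := by
  refine (norm_integral_le_of_norm_le integrable_indicator_Icc_const
    (.of_forall (norm_ftMoment_integrand_le hfs hsupp k ω))).trans_eq ?_
  rw [integral_indicator_const s measurableSet_Icc, Real.volume_real_Icc]
  norm_num

end FourierMoments

theorem abs_le_supNormR {f : ℝ → ℝ} (hf : ∃ M, ∀ t, |f t| ≤ M) (t : ℝ) : |f t| ≤ supNormR f := by
  obtain ⟨M, hM⟩ := hf
  exact le_csSup ⟨M, by rintro _ ⟨t, rfl⟩; exact hM t⟩ ⟨t, rfl⟩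

namespace VanishingModel

variable {f : ℝ → ℝ} {o : ℝ → ℂ} {β C L B εmax ξ : ℝ}

theorem hasDerivAt_ftMoment (hv : VanishingModel f o β C L B εmax) (k : ℕ) (ω : ℝ) :
    HasDerivAt (ftMoment f k) (ftMoment f (k + 1) ω) ω :=
  _root_.hasDerivAt_ftMoment hv.f_meas (abs_le_supNormR hv.f_bdd) hv.f_supp k ω

theorem norm_ftMoment_le (hv : VanishingModel f o β C L B εmax) (k : ℕ) (ω : ℝ) :
    ‖ftMoment f k ω‖ ≤ supNormR f :=
  _root_.norm_ftMoment_le (abs_le_supNormR hv.f_bdd) hv.f_supp k ω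

theorem one_lt_of_ftR_eq_zero (hv : VanishingModel f o β C L B εmax) (hξ : ftR f ξ = 0)
    (hξ0 : 0 ≤ ξ) : 1 < ξ := by
  by_contra! hξ1
  exact hv.nonvanishing ξ (abs_le.2 ⟨by linarith, hξ1⟩) hξ

theorem hasDerivAt_ftR_of_ftR_eq_zero (hv : VanishingModel f o β C L B εmax)
    (hξ : ftR f ξ = 0) (hξ1 : 1 < ξ) :
    HasDerivAt (ftR f) (deriv o ξ * ((ξ ^ (-β) : ℝ) : ℂ)) ξ := by
  have hoξ : o ξ = 0 := by
    have hdec := hv.decomposition ξ hξ1.le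
    rw [hξ, eq_comm, mul_eq_zero, ofReal_eq_zero] at hdec
    exact hdec.resolve_right (Real.rpow_pos_of_pos (by linarith) _).ne'
  have hprod := (hv.o_diff ξ).hasDerivAt.mul
    (Real.hasDerivAt_rpow_const (p := -β) (Or.inl (by linarith))).ofReal_comp
  rw [hoξ, zero_mul, add_zero] at hprod
  exact hprod.congr_of_eventuallyEq
    (Filter.eventually_of_mem (Ioi_mem_nhds hξ1) fun x hx => hv.decomposition x (le_of_lt hx))

theorem mul_rpow_le_norm_ftMoment_one (hv : VanishingModel f o β C L B εmax)
    (hξ : ftR f ξ = 0) (hξ1 : 1 < ξ) {h : ℝ} (hh : 0 < h) (hξh : ξ ≤ h⁻¹) :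
    B * supNormR f * h ^ β ≤ ‖ftMoment f 1 ξ‖ := by
  have hg1 : ftMoment f 1 ξ = deriv o ξ * ((ξ ^ (-β) : ℝ) : ℂ) :=
    (ftMoment_zero f ▸ hv.hasDerivAt_ftMoment 0 ξ).unique
      (hv.hasDerivAt_ftR_of_ftR_eq_zero hξ hξ1)
  have hderiv : B * supNormR f ≤ ‖deriv o ξ‖ :=
    hv.osc_deriv_lower 0 le_rfl hv.eps_pos.le ξ hξ1.le ⟨ξ, hξ, by simp⟩
  have hpow : h ^ β ≤ ξ ^ (-β) :=
    calc h ^ β = h⁻¹ ^ (-β) := by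
          rw [Real.rpow_neg (inv_nonneg.2 hh.le), Real.inv_rpow hh.le, inv_inv]
      _ ≤ ξ ^ (-β) := Real.rpow_le_rpow_of_nonpos (by linarith) hξh (by linarith [hv.beta_ge])
  rw [hg1, norm_mul, norm_real, Real.norm_of_nonneg (Real.rpow_nonneg (by linarith) _)]
  exact mul_le_mul hderiv hpow (Real.rpow_nonneg hh.le _) (norm_nonneg _)

end VanishingModel

theorem power_spectrum_second_deriv_lower_bound_general
    (β C B : ℝ) (hB : 0 < B) :
    ∃ c₀ : ℝ, 0 < c₀ ∧ ∃ c₁ : ℝ, 0 < c₁ ∧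
      ∀ (f : ℝ → ℝ) (o : ℝ → ℂ) (L εmax : ℝ),
        VanishingModel f o β C L B εmax →
        ∀ h : ℝ, 0 < h → h < 1 →
        ∀ εcheck : ℝ, 0 ≤ εcheck → εcheck ≤ min εmax (c₀ * h ^ (2 * β)) →
        ∀ ω ∈ Set.Icc (0 : ℝ) h⁻¹,
          (∃ ξ : ℝ, ftR f ξ = 0 ∧ |ω - ξ| ≤ εcheck ∧
            Set.Icc (ξ - εcheck) (ξ + εcheck) ⊆ Set.Icc (0 : ℝ) h⁻¹) →
          c₁ * h ^ (2 * β) * supNormR f ^ 2 ≤ |iteratedDeriv 2 (powerSpec f) ω| := by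
  refine ⟨B ^ 2 / 8, by positivity, B ^ 2, by positivity, ?_⟩
  rintro f o L εmax hv h hh - εc - hεc ω - ⟨ξ, hξ, hωξ, hsub⟩
  have hεc0 : 0 ≤ εc := (abs_nonneg _).trans hωξ
  have hξh : ξ ≤ h⁻¹ := (hsub ⟨by linarith, by linarith⟩).2
  have hξ1 : 1 < ξ := hv.one_lt_of_ftR_eq_zero hξ (by linarith [(hsub ⟨le_rfl, by linarith⟩).1])
  have hP : powerSpec f = fun y => ‖ftMoment f 0 y‖ ^ 2 := by rw [ftMoment_zero]; rfl
  have hPξ : iteratedDeriv 2 (powerSpec f) ξ = 2 * ‖ftMoment f 1 ξ‖ ^ 2 := by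
    rw [hP, iteratedDeriv_two_norm_sq_of_hasDerivAt_succ hv.hasDerivAt_ftMoment, ftMoment_zero, hξ,
      inner_zero_left, add_zero]
  have hlip := abs_iteratedDeriv_two_norm_sq_sub_le hv.hasDerivAt_ftMoment hv.norm_ftMoment_le ω ξ
  rw [← hP] at hlip
  have hs0 : 0 ≤ supNormR f := (abs_nonneg _).trans (abs_le_supNormR hv.f_bdd 0)
  have hpow : h ^ (2 * β) = (h ^ β) ^ 2 := by
    rw [mul_comm, Real.rpow_mul hh.le, Real.rpow_two]
  have hg1 := pow_le_pow_left₀ (by positivity)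
    (hv.mul_rpow_le_norm_ftMoment_one hξ hξ1 hh hξh) 2
  have hdist : 8 * supNormR f ^ 2 * |ω - ξ| ≤ 8 * supNormR f ^ 2 * (B ^ 2 / 8 * h ^ (2 * β)) :=
    mul_le_mul_of_nonneg_left (hωξ.trans (hεc.trans (min_le_right _ _))) (by positivity)
  set D := iteratedDeriv 2 (powerSpec f)
  rw [hpow] at hdist ⊢
  linarith [abs_sub_abs_le_abs_sub (D ξ) (D ω), abs_sub_comm (D ξ) (D ω), le_abs_self (D ξ)]

/-- **Lower bound on `P''` near the zeros.** Under the vanishing model, there are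
constants `c₀, c₁ > 0` depending only on `β, C, B` such that for every `h ∈ (0,1)`,
every `ε̌ ∈ [0, min(ε_max, c₀ h^{2β})]` and every `ω ∈ [0, h⁻¹]` within `ε̌` of a zero
`ξ` of `f^ft` with `[ξ - ε̌, ξ + ε̌] ⊆ [0, h⁻¹]`, one has
`|P''(ω)| ≥ c₁ h^{2β} ‖f‖_∞²`. -/
theorem power_spectrum_second_deriv_lower_bound
    (β C B : ℝ) (hβ : 1 ≤ β) (hC : 0 < C) (hB : 0 < B) :
    ∃ c₀ : ℝ, 0 < c₀ ∧ ∃ c₁ : ℝ, 0 < c₁ ∧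
      ∀ (f : ℝ → ℝ) (o : ℝ → ℂ) (L εmax : ℝ),
        VanishingModel f o β C L B εmax →
        ∀ h : ℝ, 0 < h → h < 1 →
        ∀ εcheck : ℝ, 0 ≤ εcheck → εcheck ≤ min εmax (c₀ * h ^ (2 * β)) →
        ∀ ω ∈ Set.Icc (0 : ℝ) h⁻¹,
          (∃ ξ : ℝ, ftR f ξ = 0 ∧ |ω - ξ| ≤ εcheck ∧
            Set.Icc (ξ - εcheck) (ξ + εcheck) ⊆ Set.Icc (0 : ℝ) h⁻¹) →
          c₁ * h ^ (2 * β) * supNormR f ^ 2 ≤ |iteratedDeriv 2 (powerSpec f) ω| :=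
  power_spectrum_second_deriv_lower_bound_general β C B hB
end
end
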